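/- arXiv:2405.01425 — 2 statements merged into one kernel-verified Lean document; each statement's English description precedes it below -/
import Mathlib

section
/- Let K ⊆ ℝ^d be a closed convex set with vol(K) > 0, let h > 0, and let y ∈ ℝ^d with s := dist(y, K) > 0. Then the local conductance satisfies ℓ(y) = ∫_K (2πh)^{-d/2} exp(−|y − x|²/(2h)) dx ≤ ∫_s^∞ (2πh)^{-1/2} exp(−z²/(2h)) dz ≤ (1/2)·exp(−s²/(2h)). -/
open MeasureTheory Real Set
open scoped ENNReal NNReal Pointwise Classical

noncomputable section

/-- Euclidean space ℝ^d. -/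
abbrev Euc (d : ℕ) := EuclideanSpace ℝ (Fin d)

/-- Gaussian density `φ_h(z) = (2πh)^{-d/2} exp(-|z|²/(2h))`. -/
def gaussDensity (d : ℕ) (h : ℝ) (z : Euc d) : ℝ :=
  (2 * Real.pi * h) ^ (-(d : ℝ) / 2) * Real.exp (-‖z‖ ^ 2 / (2 * h))

/-- Centered Gaussian measure `γ_h` with density `φ_h`. -/
def gaussMeasure (d : ℕ) (h : ℝ) : Measure (Euc d) :=
  volume.withDensity fun z => ENNReal.ofReal (gaussDensity d h z)

/-- Uniform probability measure on `K` (normalized restricted Lebesgue measure). -/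
def unifMeasure {d : ℕ} (K : Set (Euc d)) : Measure (Euc d) :=
  (volume K)⁻¹ • volume.restrict K

/-- Convolution of two measures. -/
def mconv {E : Type*} [MeasurableSpace E] [Add E] (μ ν : Measure E) : Measure E :=
  Measure.map (fun p : E × E => p.1 + p.2) (μ.prod ν)

/-- Local conductance `ℓ(y) = ∫_K φ_h(y-x) dx`. -/
def localCond {d : ℕ} (K : Set (Euc d)) (h : ℝ) (y : Euc d) : ℝ :=
  ∫ x in K, gaussDensity d h (y - x)

/-- The conditional measure `π^{X|Y=y}` with density `x ↦ φ_h(x-y)·1_K(x)/ℓ(y)`. -/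
def condMeasure {d : ℕ} (K : Set (Euc d)) (h : ℝ) (y : Euc d) : Measure (Euc d) :=
  volume.withDensity fun x =>
    ENNReal.ofReal (K.indicator (fun x' => gaussDensity d h (x' - y) / localCond K h y) x)

/-- The In-and-Out kernel `T_h μ = ∫ π^{X|Y=y} d(μ * γ_h)(y)`. -/
def inoKernel {d : ℕ} (K : Set (Euc d)) (h : ℝ) (μ : Measure (Euc d)) : Measure (Euc d) :=
  (mconv μ (gaussMeasure d h)).bind (condMeasure K h)

/-- `μ` is `M`-warm with respect to `π`. -/
def IsWarm {E : Type*} [MeasurableSpace E] (M : ℝ) (μ ν : Measure E) : Prop :=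
  ∀ A : Set E, MeasurableSet A → μ A ≤ ENNReal.ofReal M * ν A

/-- `χ^q` divergence; `+∞` if `μ` is not absolutely continuous w.r.t. `ν`. -/
def chiDiv {E : Type*} [MeasurableSpace E] (q : ℝ) (μ ν : Measure E) : ℝ≥0∞ :=
  if μ ≪ ν then (∫⁻ x, μ.rnDeriv ν x ^ q ∂ν) - 1 else ∞

/-- KL divergence; `+∞` if not absolutely continuous or not integrable. -/
def klDiv' {E : Type*} [MeasurableSpace E] (μ ν : Measure E) : ℝ≥0∞ :=
  if μ ≪ ν ∧ Integrable (fun x => (μ.rnDeriv ν x).toReal * Real.log (μ.rnDeriv ν x).toReal) ν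
  then ENNReal.ofReal (∫ x, (μ.rnDeriv ν x).toReal * Real.log (μ.rnDeriv ν x).toReal ∂ν)
  else ∞

/-- `q`-Rényi divergence `R_q = (q-1)⁻¹ log(1 + χ^q)`, with `R_1 = KL`. -/
def renyiDiv {E : Type*} [MeasurableSpace E] (q : ℝ) (μ ν : Measure E) : ℝ≥0∞ :=
  if q = 1 then klDiv' μ ν
  else if chiDiv q μ ν = ∞ then ∞
  else ENNReal.ofReal ((q - 1)⁻¹ * Real.log (1 + (chiDiv q μ ν).toReal))

/-- `R_∞(μ‖ν) = log ess sup_ν (dμ/dν)`. -/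
def renyiInfDiv {E : Type*} [MeasurableSpace E] (μ ν : Measure E) : ℝ≥0∞ :=
  if μ ≪ ν ∧ essSup (μ.rnDeriv ν) ν ≠ ∞
  then ENNReal.ofReal (Real.log (essSup (μ.rnDeriv ν) ν).toReal)
  else ∞

/-- `ν` satisfies a Poincaré inequality with constant `C`. -/
def SatisfiesPI {d : ℕ} (C : ℝ) (ν : Measure (Euc d)) : Prop :=
  ∀ f : Euc d → ℝ, ContDiff ℝ (⊤ : ℕ∞) f → HasCompactSupport f →
    ∫ x, (f x - ∫ y, f y ∂ν) ^ 2 ∂ν ≤ C * ∫ x, ‖fderiv ℝ f x‖ ^ 2 ∂ν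

/-- `ν` satisfies a log-Sobolev inequality with constant `C`. -/
def SatisfiesLSI {d : ℕ} (C : ℝ) (ν : Measure (Euc d)) : Prop :=
  ∀ f : Euc d → ℝ, ContDiff ℝ (⊤ : ℕ∞) f → HasCompactSupport f →
    (∫ x, f x ^ 2 * Real.log (f x ^ 2) ∂ν)
      - (∫ x, f x ^ 2 ∂ν) * Real.log (∫ x, f x ^ 2 ∂ν)
      ≤ 2 * C * ∫ x, ‖fderiv ℝ f x‖ ^ 2 ∂ν

/-- Lebesgue density of `μ * γ_t`: `y ↦ ∫ φ_t(y - x) dμ(x)`. -/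
def heatDensity (d : ℕ) (μ : Measure (Euc d)) (t : ℝ) (y : Euc d) : ℝ :=
  ∫ x, gaussDensity d t (y - x) ∂μ

/-!
The point `p` of `K` nearest to `y` exists because `K` is closed and convex, and the obtuse-angle
characterisation of `p` puts `K` inside the half-space `{x | s ≤ ⟪x - y, u⟫}`, where
`u = (p - y) / s`. The Gaussian density is a product of one-dimensional ones and is invariant under
rotations, so after rotating `u` to a coordinate vector its mass on this half-space is the
one-dimensional tail `∫_s^∞`. For `t ≥ s ≥ 0` we have `t² ≥ s² + (t - s)²`, which bounds the tail
by `exp (-s² / (2h))` times the mass of a half-line, namely `1 / 2`.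
-/

open scoped RealInnerProductSpace
open ProbabilityTheory

lemma gaussianPDFReal_zero_eq_rpow (v : ℝ≥0) (t : ℝ) :
    gaussianPDFReal 0 v t = (2 * π * v) ^ (-(1 : ℝ) / 2) * exp (-t ^ 2 / (2 * v)) := by
  simp only [gaussianPDFReal_def, sub_zero]
  rw [sqrt_eq_rpow, ← rpow_neg (by positivity)]
  norm_num

lemma gaussDensity_eq_prod (d : ℕ) (v : ℝ≥0) (z : Euc d) :
    gaussDensity d v z = ∏ i, gaussianPDFReal 0 v (z i) := by
  simp only [gaussDensity, gaussianPDFReal_zero_eq_rpow, Finset.prod_mul_distrib, ← exp_sum,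
    Finset.prod_const, Finset.card_univ, Fintype.card_fin, EuclideanSpace.real_norm_sq_eq,
    ← rpow_mul_natCast (by positivity : (0 : ℝ) ≤ 2 * π * v), ← Finset.sum_div,
    Finset.sum_neg_distrib, neg_div]
  ring_nf

lemma integrable_gaussDensity (d : ℕ) (v : ℝ≥0) : Integrable (gaussDensity d v) := by
  rw [← (PiLp.volume_preserving_toLp (Fin d)).integrable_comp_emb
    (MeasurableEquiv.toLp 2 _).measurableEmbedding]
  simp only [Function.comp_def, gaussDensity_eq_prod]
  exact Integrable.fintype_prod fun _ ↦ integrable_gaussianPDFReal 0 v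

lemma setIntegral_coord_ge_gaussDensity {d : ℕ} {v : ℝ≥0} (hv : v ≠ 0) (i : Fin d) (s : ℝ) :
    ∫ z in {z : Euc d | s ≤ z i}, gaussDensity d v z = ∫ t in Ici s, gaussianPDFReal 0 v t := by
  set F : Fin d → ℝ → ℝ :=
    Function.update (fun _ ↦ gaussianPDFReal 0 v) i ((Ici s).indicator (gaussianPDFReal 0 v))
  have hF : ∀ x : Fin d → ℝ,
      {z : Euc d | s ≤ z i}.indicator (gaussDensity d v) (WithLp.toLp 2 x) = ∏ j, F j (x j) := by
    intro x
    by_cases hx : WithLp.toLp 2 x ∈ {z : Euc d | s ≤ z i}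
    · rw [indicator_of_mem hx, gaussDensity_eq_prod]
      refine Finset.prod_congr rfl fun j _ ↦ ?_
      rcases eq_or_ne j i with rfl | hj
      · simp_all [F]
      · simp [F, hj]
    · rw [indicator_of_notMem hx]
      exact (Finset.prod_eq_zero (Finset.mem_univ i) (by simp_all [F])).symm
  rw [← integral_indicator (measurableSet_le measurable_const (by fun_prop)),
    ← (PiLp.volume_preserving_toLp (Fin d)).integral_comp
      (MeasurableEquiv.toLp 2 _).measurableEmbedding]
  simp_rw [hF]
  rw [integral_fintype_prod_volume_eq_prod, Finset.prod_eq_single i]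
  · simp [F, integral_indicator measurableSet_Ici]
  · intro j _ hj
    simp [F, hj, integral_gaussianPDFReal_eq_one 0 hv]
  · simp

lemma setIntegral_inner_ge_gaussDensity {d : ℕ} {v : ℝ≥0} (hv : v ≠ 0) {u : Euc d}
    (hu : ‖u‖ = 1) (s : ℝ) :
    ∫ z in {z : Euc d | s ≤ ⟪z, u⟫}, gaussDensity d v z = ∫ t in Ici s, gaussianPDFReal 0 v t := by
  obtain ⟨i⟩ : Nonempty (Fin d) := by
    by_contra hd
    rw [not_nonempty_iff] at hd
    simp [Subsingleton.elim u 0] at hu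
  have hunit : Orthonormal ℝ (({i} : Set (Fin d)).domRestrict fun _ ↦ u) :=
    ⟨fun _ ↦ hu, fun j k hjk ↦ absurd (Subsingleton.elim j k) hjk⟩
  obtain ⟨b, hb⟩ := hunit.exists_orthonormalBasis_extension_of_card_eq (by simp)
  have hpre : b.repr.symm ⁻¹' {z | s ≤ ⟪z, u⟫} = {w | s ≤ w i} := by
    ext w
    simp [← hb i rfl, real_inner_comm, ← b.repr_apply_apply]
  rw [← b.measurePreserving_repr_symm.setIntegral_preimage_emb
    b.repr.symm.toHomeomorph.measurableEmbedding, hpre]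
  simpa [gaussDensity] using setIntegral_coord_ge_gaussDensity hv i s

lemma localCond_mono {d : ℕ} {K L : Set (Euc d)} (v : ℝ≥0) (y : Euc d) (hKL : K ⊆ L) :
    localCond K v y ≤ localCond L v y :=
  setIntegral_mono_set ((integrable_gaussDensity d v).comp_sub_left y).integrableOn
    (.of_forall fun _ ↦ by unfold gaussDensity; positivity) hKL.eventuallyLE

lemma localCond_halfSpace {d : ℕ} {v : ℝ≥0} (hv : v ≠ 0) {u : Euc d} (hu : ‖u‖ = 1)
    (s : ℝ) (y : Euc d) :
    localCond {x | s ≤ ⟪x - y, u⟫} v y = ∫ t in Ici s, gaussianPDFReal 0 v t := by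
  have hmeas (c : Euc d) : MeasurableSet {x : Euc d | s ≤ ⟪x - c, u⟫} :=
    measurableSet_le measurable_const (by fun_prop)
  rw [← setIntegral_inner_ge_gaussDensity hv hu s, localCond, ← integral_indicator (hmeas y),
    ← integral_add_left_eq_self _ y, ← integral_indicator (by simpa using hmeas 0)]
  congr with z
  simp [indicator, gaussDensity]

lemma exists_norm_eq_one_infDist_le_inner {E : Type*} [NormedAddCommGroup E]
    [InnerProductSpace ℝ E] [CompleteSpace E] {K : Set E} (hconv : Convex ℝ K)
    (hcl : IsClosed K) {y : E} (hs : 0 < Metric.infDist y K) :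
    ∃ u : E, ‖u‖ = 1 ∧ ∀ x ∈ K, Metric.infDist y K ≤ ⟪x - y, u⟫ := by
  have hne : K.Nonempty := nonempty_iff_ne_empty.2 fun hK ↦ by simp [hK] at hs
  obtain ⟨p, hpK, hp⟩ := exists_norm_eq_iInf_of_complete_convex hne hcl.isComplete hconv y
  have hdist : Metric.infDist y K = ‖p - y‖ := by
    rw [norm_sub_rev, hp, Metric.infDist_eq_iInf]
    simp [dist_eq_norm]
  rw [hdist] at hs ⊢
  refine ⟨‖p - y‖⁻¹ • (p - y), by simp [norm_smul, hs.ne'], fun x hx ↦ ?_⟩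
  have hobtuse := (norm_eq_iInf_iff_real_inner_le_zero hconv hpK).1 hp x hx
  have : ‖p - y‖ ^ 2 ≤ ⟪x - y, p - y⟫ := by
    rw [show x - y = (x - p) + (p - y) by abel, inner_add_left, real_inner_self_eq_norm_sq,
      ← neg_sub y p, inner_neg_right, real_inner_comm]
    linarith
  rwa [real_inner_smul_right, le_inv_mul_iff₀ hs, ← sq]

lemma integral_Ioi_zero_gaussianPDFReal {v : ℝ≥0} (hv : v ≠ 0) :
    ∫ t in Ioi 0, gaussianPDFReal 0 v t = 1 / 2 := by
  have hquad (t : ℝ) : -t ^ 2 / (2 * v) = -(2 * v : ℝ)⁻¹ * t ^ 2 := by ring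
  simp only [gaussianPDFReal_def, sub_zero, hquad]
  rw [integral_const_mul, integral_gaussian_Ioi, div_inv_eq_mul, ← mul_assoc, mul_comm π, ← mul_div_assoc, inv_mul_cancel₀ (by positivity)]

lemma setIntegral_Ioi_comp_sub_self {E : Type*} [NormedAddCommGroup E] [NormedSpace ℝ E]
    (f : ℝ → E) (s : ℝ) :
    ∫ t in Ioi s, f (t - s) = ∫ t in Ioi 0, f t := by
  rw [← integral_indicator measurableSet_Ioi, ← integral_indicator measurableSet_Ioi,
    ← integral_sub_right_eq_self ((Ioi 0).indicator f) s]
  congr with t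
  simp [indicator, sub_pos]

lemma integral_Ioi_gaussianPDFReal_le {v : ℝ≥0} (hv : v ≠ 0) {s : ℝ} (hs : 0 ≤ s) :
    ∫ t in Ioi s, gaussianPDFReal 0 v t ≤ 1 / 2 * exp (-s ^ 2 / (2 * v)) := by
  have hle : ∀ t ∈ Ioi s,
      gaussianPDFReal 0 v t ≤ exp (-s ^ 2 / (2 * v)) * gaussianPDFReal 0 v (t - s) := by
    intro t ht
    simp only [gaussianPDFReal_def, sub_zero]
    rw [mul_left_comm, ← exp_add, ← add_div]
    gcongr
    nlinarith [mem_Ioi.1 ht]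
  calc ∫ t in Ioi s, gaussianPDFReal 0 v t
      ≤ ∫ t in Ioi s, exp (-s ^ 2 / (2 * v)) * gaussianPDFReal 0 v (t - s) :=
        setIntegral_mono_on (integrable_gaussianPDFReal 0 v).integrableOn
          (((integrable_gaussianPDFReal 0 v).comp_sub_right s).const_mul _).integrableOn
          measurableSet_Ioi hle
    _ = 1 / 2 * exp (-s ^ 2 / (2 * v)) := by
        rw [integral_const_mul, setIntegral_Ioi_comp_sub_self, integral_Ioi_zero_gaussianPDFReal hv,
          mul_comm]

theorem stmt11_general (d : ℕ) (K : Set (Euc d)) (hconv : Convex ℝ K)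
    (hcl : IsClosed K) (h : ℝ) (hh : 0 < h)
    (y : Euc d) (hs : 0 < Metric.infDist y K) :
    localCond K h y
      ≤ ∫ z in Set.Ioi (Metric.infDist y K),
          (2 * Real.pi * h) ^ (-(1 : ℝ) / 2) * Real.exp (-z ^ 2 / (2 * h)) ∧
    (∫ z in Set.Ioi (Metric.infDist y K),
        (2 * Real.pi * h) ^ (-(1 : ℝ) / 2) * Real.exp (-z ^ 2 / (2 * h)))
      ≤ (1 / 2) * Real.exp (-(Metric.infDist y K) ^ 2 / (2 * h)) := by
  lift h to ℝ≥0 using hh.le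
  have hv : h ≠ 0 := by exact_mod_cast hh.ne'
  simp_rw [← gaussianPDFReal_zero_eq_rpow]
  obtain ⟨u, hu, hKu⟩ := exists_norm_eq_one_infDist_le_inner hconv hcl hs
  refine ⟨?_, integral_Ioi_gaussianPDFReal_le hv hs.le⟩
  calc localCond K h y
      ≤ localCond {x | Metric.infDist y K ≤ ⟪x - y, u⟫} h y := localCond_mono h y hKu
    _ = ∫ t in Ici (Metric.infDist y K), gaussianPDFReal 0 h t := localCond_halfSpace hv hu _ y
    _ = _ := integral_Ici_eq_integral_Ioi

/-- local-conductance bound in terms of the distance to a closed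
convex set: `ℓ(y) ≤ ∫_s^∞ (2πh)^{-1/2} e^{-z²/(2h)} dz ≤ (1/2) e^{-s²/(2h)}`. -/
theorem stmt11 (d : ℕ) (hd : 1 ≤ d) (K : Set (Euc d)) (hconv : Convex ℝ K)
    (hcl : IsClosed K) (hK0 : 0 < volume K) (h : ℝ) (hh : 0 < h)
    (y : Euc d) (hs : 0 < Metric.infDist y K) :
    localCond K h y
      ≤ ∫ z in Set.Ioi (Metric.infDist y K),
          (2 * Real.pi * h) ^ (-(1 : ℝ) / 2) * Real.exp (-z ^ 2 / (2 * h)) ∧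
    (∫ z in Set.Ioi (Metric.infDist y K),
        (2 * Real.pi * h) ^ (-(1 : ℝ) / 2) * Real.exp (-z ^ 2 / (2 * h)))
      ≤ (1 / 2) * Real.exp (-(Metric.infDist y K) ^ 2 / (2 * h)) :=
  stmt11_general d K hconv hcl h hh y hs
end
end

section
/- (Bias from conditioning on success.) Let (Ω, F, P) be a probability space, X : Ω → E a random variable taking values in a measurable space E, and S ∈ F an event with P(S) ≥ 1 − η for some η ∈ (0, 1). Let μ be the law of X and μ^cap the law of X conditioned on S, i.e. μ^cap(A) = P({X ∈ A} ∩ S)/P(S). Then μ^cap ≪ μ with dμ^cap/dμ ≤ 1/(1 − η) μ-almost everywhere, so that R_∞(μ^cap‖μ) ≤ log(1/(1 − η)); consequently, for every q > 1 and every probability measure π on E, R_q(μ^cap‖π) ≤ R_q(μ‖π) + (q/(q − 1))·log(1/(1 − η)). -/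
/-! Since `P.restrict S ≤ P`, the conditioned law satisfies `μcap ≤ P(S)⁻¹ • μ ≤ (1 - η)⁻¹ • μ`.
A domination `μ' ≤ c • ν` of measures turns into the domination `dμ'/dξ ≤ c · dν/dξ` of
densities against any reference measure `ξ` (compare set integrals). With `ξ = μ` this bounds the
density and `R_∞`; with `ξ = π` it gives `1 + χ^q(μcap‖π) ≤ c^q (1 + χ^q(μ‖π))`, and taking
logarithms gives the Rényi bound. -/

open MeasureTheory Real Set
open scoped ENNReal NNReal Pointwise Classical

noncomputable section

namespace MeasureTheory.Measure

variable {α : Type*} [MeasurableSpace α] {μ ν ξ : Measure α} {c : ℝ≥0∞}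

lemma rnDeriv_le_const_mul_rnDeriv_of_le_smul [ν.HaveLebesgueDecomposition ξ] [SigmaFinite ξ]
    (hνξ : ν ≪ ξ) (h : μ ≤ c • ν) :
    μ.rnDeriv ξ ≤ᵐ[ξ] fun x ↦ c * ν.rnDeriv ξ x := by
  refine ae_le_of_forall_setLIntegral_le_of_sigmaFinite (μ.measurable_rnDeriv ξ)
    fun s hs _ ↦ ?_
  rw [lintegral_const_mul _ (ν.measurable_rnDeriv ξ), setLIntegral_rnDeriv' hνξ hs]
  exact (setLIntegral_rnDeriv_le s).trans (h s)

lemma rnDeriv_le_of_le_smul [SigmaFinite ν] (h : μ ≤ c • ν) :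
    ∀ᵐ x ∂ν, μ.rnDeriv ν x ≤ c := by
  filter_upwards [rnDeriv_le_const_mul_rnDeriv_of_le_smul .rfl h, ν.rnDeriv_self] with x hx hx1
  simpa [hx1] using hx

lemma lintegral_rnDeriv_rpow_le_of_le_smul [ν.HaveLebesgueDecomposition ξ] [SigmaFinite ξ]
    {q : ℝ} (hq : 0 ≤ q) (hνξ : ν ≪ ξ) (h : μ ≤ c • ν) :
    ∫⁻ x, μ.rnDeriv ξ x ^ q ∂ξ ≤ c ^ q * ∫⁻ x, ν.rnDeriv ξ x ^ q ∂ξ := by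
  rw [← lintegral_const_mul _ ((ν.measurable_rnDeriv ξ).pow_const q)]
  refine lintegral_mono_ae ?_
  filter_upwards [rnDeriv_le_const_mul_rnDeriv_of_le_smul hνξ h] with x hx
  rw [← ENNReal.mul_rpow_of_nonneg _ _ hq]
  exact ENNReal.rpow_le_rpow hx hq

lemma smul_map_restrict_le_smul_map {Ω E : Type*} [MeasurableSpace Ω] [MeasurableSpace E]
    (P : Measure Ω) (S : Set Ω) {X : Ω → E} (hX : Measurable X) {a b : ℝ≥0∞} (hab : a ≤ b) :
    a • (P.restrict S).map X ≤ b • P.map X :=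
  fun s ↦ mul_le_mul' hab (map_mono restrict_le_self hX s)

end MeasureTheory.Measure

section Renyi

variable {E : Type*} [MeasurableSpace E] {μ ν ξ : Measure E} {q : ℝ}

lemma renyiDiv_eq_top_of_not_absolutelyContinuous (hq : q ≠ 1) (h : ¬μ ≪ ξ) :
    renyiDiv q μ ξ = ∞ := by
  rw [renyiDiv, if_neg hq, chiDiv, if_neg h, if_pos rfl]

lemma renyiInfDiv_le_log_of_ae_rnDeriv_le {c : ℝ} (hμν : μ ≪ ν)
    (h : ∀ᵐ x ∂ν, μ.rnDeriv ν x ≤ ENNReal.ofReal c) :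
    renyiInfDiv μ ν ≤ ENNReal.ofReal (Real.log c) := by
  have hsup : essSup (μ.rnDeriv ν) ν ≤ ENNReal.ofReal c := essSup_le_of_ae_le _ h
  rw [renyiInfDiv, if_pos ⟨hμν, ne_top_of_le_ne_top ENNReal.ofReal_ne_top hsup⟩]
  rcases (essSup (μ.rnDeriv ν) ν).toReal_nonneg.eq_or_lt with h0 | hpos
  · simp [← h0]
  · have hsup' := ENNReal.toReal_mono ENNReal.ofReal_ne_top hsup
    rw [ENNReal.toReal_ofReal'] at hsup'
    have hc : 0 < c := by
      by_contra! hc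
      rw [max_eq_right hc] at hsup'
      linarith
    rw [max_eq_left hc.le] at hsup'
    exact ENNReal.ofReal_le_ofReal (Real.log_le_log hpos hsup')

lemma one_add_chiDiv_le_of_le_smul [ν.HaveLebesgueDecomposition ξ] [SigmaFinite ξ] {c : ℝ}
    (hc : 1 ≤ c) (hq : 0 ≤ q) (hνξ : ν ≪ ξ) (h : μ ≤ ENNReal.ofReal c • ν) :
    1 + chiDiv q μ ξ ≤ ENNReal.ofReal (c ^ q) * (1 + chiDiv q ν ξ) := by
  have hμξ : μ ≪ ξ := (Measure.absolutelyContinuous_of_le_smul h).trans hνξ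
  have hcq : 1 ≤ ENNReal.ofReal (c ^ q) := by
    simpa using ENNReal.ofReal_le_ofReal (Real.one_le_rpow hc hq)
  rw [chiDiv, if_pos hμξ, chiDiv, if_pos hνξ, add_tsub_eq_max, add_tsub_eq_max]
  refine max_le (hcq.trans (le_mul_of_one_le_right' (le_max_left _ _))) ?_
  rw [← ENNReal.ofReal_rpow_of_nonneg (by linarith) hq]
  exact (Measure.lintegral_rnDeriv_rpow_le_of_le_smul hq hνξ h).trans
    (by gcongr; exact le_max_right _ _)

lemma renyiDiv_le_add_log_of_one_add_chiDiv_le (hq : 1 < q) {C : ℝ}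
    (h : 1 + chiDiv q μ ξ ≤ ENNReal.ofReal C * (1 + chiDiv q ν ξ)) :
    renyiDiv q μ ξ ≤ renyiDiv q ν ξ + ENNReal.ofReal ((q - 1)⁻¹ * Real.log C) := by
  by_cases hν : chiDiv q ν ξ = ∞
  · simp [renyiDiv, hq.ne', hν]
  have hμ : chiDiv q μ ξ ≠ ∞ := by
    refine ne_top_of_le_ne_top ?_ (le_add_self.trans h)
    exact ENNReal.mul_ne_top ENNReal.ofReal_ne_top (by simpa using hν)
  rw [renyiDiv, if_neg hq.ne', if_neg hμ, renyiDiv, if_neg hq.ne', if_neg hν]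
  have hC : 0 < C := by
    by_contra! hC
    rw [ENNReal.ofReal_of_nonpos hC, zero_mul] at h
    simp at h
  have hreal : 1 + (chiDiv q μ ξ).toReal ≤ C * (1 + (chiDiv q ν ξ).toReal) := by
    have := ENNReal.toReal_mono (ENNReal.mul_ne_top ENNReal.ofReal_ne_top (by simpa using hν)) h
    rwa [ENNReal.toReal_mul, ENNReal.toReal_add ENNReal.one_ne_top hμ,
      ENNReal.toReal_add ENNReal.one_ne_top hν, ENNReal.toReal_ofReal hC.le,
      ENNReal.toReal_one] at this
  have hlog : Real.log (1 + (chiDiv q μ ξ).toReal)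
      ≤ Real.log C + Real.log (1 + (chiDiv q ν ξ).toReal) := by
    rw [← Real.log_mul hC.ne' (by positivity)]
    exact Real.log_le_log (by positivity) hreal
  refine (ENNReal.ofReal_le_ofReal ?_).trans ENNReal.ofReal_add_le
  have hq' : 0 ≤ (q - 1)⁻¹ := inv_nonneg.2 (by linarith)
  linarith [mul_le_mul_of_nonneg_left hlog hq']

lemma renyiDiv_le_add_log_of_le_smul [ν.HaveLebesgueDecomposition ξ] [SigmaFinite ξ] (hq : 1 < q)
    {c : ℝ} (hc : 1 ≤ c) (h : μ ≤ ENNReal.ofReal c • ν) :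
    renyiDiv q μ ξ ≤ renyiDiv q ν ξ + ENNReal.ofReal (q / (q - 1) * Real.log c) := by
  by_cases hνξ : ν ≪ ξ
  · convert renyiDiv_le_add_log_of_one_add_chiDiv_le hq
      (one_add_chiDiv_le_of_le_smul hc (by linarith) hνξ h) using 3
    rw [Real.log_rpow (by linarith)]
    ring
  · simp [renyiDiv_eq_top_of_not_absolutelyContinuous hq.ne' hνξ]

end Renyi

theorem stmt14_general {Ω E : Type*} [MeasurableSpace Ω] [MeasurableSpace E]
    (P : Measure Ω) [IsProbabilityMeasure P] (X : Ω → E) (hX : Measurable X)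
    (S : Set Ω) (η : ℝ) (hη : η ∈ Set.Ioo (0 : ℝ) 1)
    (hPS : ENNReal.ofReal (1 - η) ≤ P S)
    (μ μcap : Measure E)
    (hμ : μ = P.map X) (hμcap : μcap = (P S)⁻¹ • (P.restrict S).map X) :
    μcap ≪ μ ∧
    (∀ᵐ x ∂μ, μcap.rnDeriv μ x ≤ ENNReal.ofReal (1 / (1 - η))) ∧
    renyiInfDiv μcap μ ≤ ENNReal.ofReal (Real.log (1 / (1 - η))) ∧
    (∀ q : ℝ, 1 < q → ∀ π' : Measure E, IsProbabilityMeasure π' →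
      renyiDiv q μcap π'
        ≤ renyiDiv q μ π' + ENNReal.ofReal (q / (q - 1) * Real.log (1 / (1 - η)))) := by
  subst hμ hμcap
  have hη1 : 0 < 1 - η := by linarith [hη.2]
  have hc : 1 ≤ 1 / (1 - η) := by
    rw [le_div_iff₀ hη1]
    linarith [hη.1]
  have hPS_inv : (P S)⁻¹ ≤ ENNReal.ofReal (1 / (1 - η)) := by
    rw [one_div, ENNReal.ofReal_inv_of_pos hη1]
    exact ENNReal.inv_le_inv' hPS
  have hle := Measure.smul_map_restrict_le_smul_map P S hX hPS_inv
  have : IsProbabilityMeasure (P.map X) := Measure.isProbabilityMeasure_map hX.aemeasurable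
  have hac := Measure.absolutelyContinuous_of_le_smul hle
  have hbound := Measure.rnDeriv_le_of_le_smul hle
  exact ⟨hac, hbound, renyiInfDiv_le_log_of_ae_rnDeriv_le hac hbound,
    fun q hq π' _ ↦ renyiDiv_le_add_log_of_le_smul hq hc hle⟩

/-- bias from conditioning on success: if `P(S) ≥ 1 − η`, the law
of `X` conditioned on `S` has density at most `1/(1−η)` w.r.t. the law of `X`,
hence `R_∞(μ^cap‖μ) ≤ log(1/(1−η))` and for all `q > 1` and probability `π`,
`R_q(μ^cap‖π) ≤ R_q(μ‖π) + (q/(q−1))·log(1/(1−η))`. -/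
theorem stmt14 {Ω E : Type*} [MeasurableSpace Ω] [MeasurableSpace E]
    (P : Measure Ω) [IsProbabilityMeasure P] (X : Ω → E) (hX : Measurable X)
    (S : Set Ω) (hS : MeasurableSet S) (η : ℝ) (hη : η ∈ Set.Ioo (0 : ℝ) 1)
    (hPS : ENNReal.ofReal (1 - η) ≤ P S)
    (μ μcap : Measure E)
    (hμ : μ = P.map X) (hμcap : μcap = (P S)⁻¹ • (P.restrict S).map X) :
    μcap ≪ μ ∧
    (∀ᵐ x ∂μ, μcap.rnDeriv μ x ≤ ENNReal.ofReal (1 / (1 - η))) ∧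
    renyiInfDiv μcap μ ≤ ENNReal.ofReal (Real.log (1 / (1 - η))) ∧
    (∀ q : ℝ, 1 < q → ∀ π' : Measure E, IsProbabilityMeasure π' →
      renyiDiv q μcap π'
        ≤ renyiDiv q μ π' + ENNReal.ofReal (q / (q - 1) * Real.log (1 / (1 - η)))) :=
  stmt14_general P X hX S η hη hPS μ μcap hμ hμcap
end
end
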